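/- Let A be a first-order alternating automaton, α = a₁…aₙ an input event sequence, Υ(α) its acceptance formula, and Θ̂(α) the formula obtained from Υ(α) by eliminating path quantifiers (Definition of Θ̂). Then for every valuation ν of the time-stamped input variables X^{(≤n)} and every interpretation I, if I, ν ⊨ Υ(α) then I, ν ⊨ Θ̂(α). -/

import Mathlib

set_option maxHeartbeats 1000000
set_option autoImplicit false

open scoped Classical

noncomputable section

namespace FOADA

/-! ### Terms over a data domain `D` (all function symbols have a fixed interpretation) -/

inductive Term (D : Type) (V : Type) : Type where
  | var : V → Term D V
  | app : {n : ℕ} → ((Fin n → D) → D) → (Fin n → Term D V) → Term D V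

namespace Term

variable {D V W : Type}

def eval (ν : V → D) : Term D V → D
  | var v => ν v
  | app f ts => f fun i => (ts i).eval ν

def rename (f : V → W) : Term D V → Term D W
  | var v => var (f v)
  | app g ts => app g fun i => (ts i).rename f

def subst (σ : V → Term D W) : Term D V → Term D W
  | var v => σ v
  | app g ts => app g fun i => (ts i).subst σ

def vars : Term D V → Set V
  | var v => {v}
  | app _ ts => ⋃ i, (ts i).vars

def const (d : D) : Term D V := app (n := 0) (fun _ => d) Fin.elim0

end Term

/-! ### Interpretations, configurations and cubes -/

def Interp (D Q : Type) (ar : Q → ℕ) : Type := ∀ q : Q, Set (Fin (ar q) → D)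

def Interp.le {D Q : Type} {ar : Q → ℕ} (I J : Interp D Q ar) : Prop := ∀ q, I q ⊆ J q

/-- Configurations `q(d₁,…,d_{#q})`. -/
def Config (D Q : Type) (ar : Q → ℕ) : Type := Σ q : Q, Fin (ar q) → D

/-- The cube of an interpretation. -/
def Interp.cube {D Q : Type} {ar : Q → ℕ} (I : Interp D Q ar) : Set (Config D Q ar) :=
  {c | c.2 ∈ I c.1}

/-! ### First-order formulas with uninterpreted predicate symbols -/

inductive Fml (D Q : Type) (ar : Q → ℕ) : Type → Type 1 where
  | eq : {V : Type} → Term D V → Term D V → Fml D Q ar V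
  | pred : {V : Type} → (q : Q) → (Fin (ar q) → Term D V) → Fml D Q ar V
  | not : {V : Type} → Fml D Q ar V → Fml D Q ar V
  | and : {V : Type} → Fml D Q ar V → Fml D Q ar V → Fml D Q ar V
  | ex : {V : Type} → Fml D Q ar (Option V) → Fml D Q ar V

namespace Fml

variable {D Q : Type} {ar : Q → ℕ}

/-- The satisfaction relation `I, ν ⊨ φ`. -/
def Sat (I : Interp D Q ar) : {V : Type} → Fml D Q ar V → (V → D) → Prop
  | _, .eq t s, ν => t.eval ν = s.eval ν
  | _, .pred q ts, ν => (fun i => (ts i).eval ν) ∈ I q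
  | _, .not φ, ν => ¬ Sat I φ ν
  | _, .and φ ψ, ν => Sat I φ ν ∧ Sat I ψ ν
  | _, .ex φ, ν => ∃ d : D, Sat I φ fun o => o.elim d ν

def tt [Nonempty D] {V : Type} : Fml D Q ar V :=
  .eq (Term.const (Classical.arbitrary D)) (Term.const (Classical.arbitrary D))

def ff [Nonempty D] {V : Type} : Fml D Q ar V := .not tt

def or {V : Type} (φ ψ : Fml D Q ar V) : Fml D Q ar V := .not (.and (.not φ) (.not ψ))

def imp {V : Type} (φ ψ : Fml D Q ar V) : Fml D Q ar V := .not (.and φ (.not ψ))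

def all {V : Type} (φ : Fml D Q ar (Option V)) : Fml D Q ar V := .not (.ex (.not φ))

def conj [Nonempty D] {V : Type} : List (Fml D Q ar V) → Fml D Q ar V
  | [] => tt
  | φ :: l => .and φ (conj l)

def disj [Nonempty D] {V : Type} : List (Fml D Q ar V) → Fml D Q ar V
  | [] => ff
  | φ :: l => or φ (disj l)

def rename : {V W : Type} → (V → W) → Fml D Q ar V → Fml D Q ar W
  | _, _, f, .eq t s => .eq (t.rename f) (s.rename f)
  | _, _, f, .pred q ts => .pred q fun i => (ts i).rename f
  | _, _, f, .not φ => .not (rename f φ)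
  | _, _, f, .and φ ψ => .and (rename f φ) (rename f ψ)
  | _, _, f, .ex φ => .ex (rename (Option.map f) φ)

def substVar : {V W : Type} → (V → Term D W) → Fml D Q ar V → Fml D Q ar W
  | _, _, σ, .eq t s => .eq (t.subst σ) (s.subst σ)
  | _, _, σ, .pred q ts => .pred q fun i => (ts i).subst σ
  | _, _, σ, .not φ => .not (substVar σ φ)
  | _, _, σ, .and φ ψ => .and (substVar σ φ) (substVar σ ψ)
  | _, _, σ, .ex φ =>
      .ex (substVar (fun o => Option.elim o (.var none) fun v => (σ v).rename some) φ)

/-- Existential quantification of a block of variables. -/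
def exN : {V : Type} → {k : ℕ} → Fml D Q ar (V ⊕ Fin k) → Fml D Q ar V
  | _, 0, φ => φ.rename (Sum.elim id Fin.elim0)
  | _, k + 1, φ =>
      exN (k := k) (.ex (φ.rename fun v =>
        match v with
        | Sum.inl v => some (Sum.inl v)
        | Sum.inr j => Fin.lastCases none (fun i => some (Sum.inr i)) j))

/-- Universal quantification of a block of variables. -/
def allN {V : Type} {k : ℕ} (φ : Fml D Q ar (V ⊕ Fin k)) : Fml D Q ar V :=
  .not (exN (.not φ))

/-- `Polarity φ b` : every predicate occurrence in `φ` has polarity `b`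
(`b = true` : under an even number of negations). -/
def Polarity : {V : Type} → Fml D Q ar V → Bool → Prop
  | _, .eq _ _, _ => True
  | _, .pred _ _, b => b = true
  | _, .not φ, b => Polarity φ (!b)
  | _, .and φ ψ, b => Polarity φ b ∧ Polarity ψ b
  | _, .ex φ, b => Polarity φ b

/-- A formula is positive if every predicate symbol occurs under an even number of negations. -/
def Positive {V : Type} (φ : Fml D Q ar V) : Prop := φ.Polarity true

/-- Free variables of a formula. -/
def fv : {V : Type} → Fml D Q ar V → Set V
  | _, .eq t s => t.vars ∪ s.vars
  | _, .pred _ ts => ⋃ i, (ts i).vars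
  | _, .not φ => fv φ
  | _, .and φ ψ => fv φ ∪ fv ψ
  | _, .ex φ => {v | some v ∈ fv φ}

/-- Predicate symbols occurring in a formula. -/
def preds : {V : Type} → Fml D Q ar V → Set Q
  | _, .eq _ _ => ∅
  | _, .pred q _ => {q}
  | _, .not φ => preds φ
  | _, .and φ ψ => preds φ ∪ preds ψ
  | _, .ex φ => preds φ

/-- Predicate symbols occurring with polarity `b` (`true` = even number of negations). -/
def predsPol : Bool → {V : Type} → Fml D Q ar V → Set Q
  | _, _, .eq _ _ => ∅
  | b, _, .pred q _ => if b then {q} else ∅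
  | b, _, .not φ => predsPol (!b) φ
  | b, _, .and φ ψ => predsPol b φ ∪ predsPol b ψ
  | b, _, .ex φ => predsPol b φ

/-- Number of predicate atom occurrences. -/
def atomCount : {V : Type} → Fml D Q ar V → ℕ
  | _, .eq _ _ => 0
  | _, .pred _ _ => 1
  | _, .not φ => atomCount φ
  | _, .and φ ψ => atomCount φ + atomCount ψ
  | _, .ex φ => atomCount φ

/-- No predicate atom with symbol `q0` occurs. -/
def noPredOcc (q0 : Q) : {V : Type} → Fml D Q ar V → Prop
  | _, .eq _ _ => True
  | _, .pred q _ => q ≠ q0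
  | _, .not φ => noPredOcc q0 φ
  | _, .and φ ψ => noPredOcc q0 φ ∧ noPredOcc q0 ψ
  | _, .ex φ => noPredOcc q0 φ

/-- The size of a formula. -/
def size : {V : Type} → Fml D Q ar V → ℕ
  | _, .eq _ _ => 1
  | _, .pred _ _ => 1
  | _, .not φ => size φ + 1
  | _, .and φ ψ => size φ + size ψ + 1
  | _, .ex φ => size φ + 1

/-- The dual of a (positive) formula. -/
def dual : {V : Type} → Fml D Q ar V → Fml D Q ar V
  | _, .eq t s => .not (.eq t s)
  | _, .pred q ts => .pred q ts
  | _, .not φ => .not (dual φ)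
  | _, .and φ ψ => or (dual φ) (dual ψ)
  | _, .ex φ => .not (.ex (.not (dual φ)))

/-- Map predicate symbols along an arity-preserving function. -/
def mapPred {Q' : Type} {ar' : Q' → ℕ} (f : Q → Q') (h : ∀ q, ar' (f q) = ar q) :
    {V : Type} → Fml D Q ar V → Fml D Q' ar' V
  | _, .eq t s => .eq t s
  | _, .pred q ts => .pred (f q) fun i => ts (Fin.cast (h q) i)
  | _, .not φ => .not (mapPred f h φ)
  | _, .and φ ψ => .and (mapPred f h φ) (mapPred f h ψ)
  | _, .ex φ => .ex (mapPred f h φ)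

/-- Substitute, for every predicate atom `q(t̄)`, the formula `σ q` with parameters
instantiated by `t̄` (plus a fixed set `V0` of "global" variables embedded by `ρ`). -/
def substPred {Q' : Type} {ar' : Q' → ℕ} {V0 : Type}
    (σ : ∀ q : Q, Fml D Q' ar' (V0 ⊕ Fin (ar q))) :
    {V : Type} → (V0 → V) → Fml D Q ar V → Fml D Q' ar' V
  | _, _, .eq t s => .eq t s
  | _, ρ, .pred q ts => (σ q).substVar (Sum.elim (fun v0 => .var (ρ v0)) fun i => ts i)
  | _, ρ, .not φ => .not (substPred σ ρ φ)
  | _, ρ, .and φ ψ => .and (substPred σ ρ φ) (substPred σ ρ ψ)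
  | _, ρ, .ex φ => .ex (substPred σ (fun v0 => some (ρ v0)) φ)

/-- Replace, in place, every atom of the single predicate `q0` by the instance of `ψ`;
all other predicate atoms are kept. -/
def replaceP [DecidableEq Q] (q0 : Q) {V0 : Type} (ψ : Fml D Q ar (V0 ⊕ Fin (ar q0))) :
    {V : Type} → (V0 → V) → Fml D Q ar V → Fml D Q ar V
  | _, _, .eq t s => .eq t s
  | _, ρ, .pred q ts =>
      if h : q = q0 then
        ψ.substVar (Sum.elim (fun v0 => .var (ρ v0))
          fun i => ts (Fin.cast (congrArg ar h.symm) i))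
      else .pred q ts
  | _, ρ, .not φ => .not (replaceP q0 ψ ρ φ)
  | _, ρ, .and φ ψ' => .and (replaceP q0 ψ ρ φ) (replaceP q0 ψ ρ ψ')
  | _, ρ, .ex φ => .ex (replaceP q0 ψ (fun v0 => some (ρ v0)) φ)

end Fml

/-- Minimal models of a formula under a valuation. -/
def MinModels {D Q : Type} {ar : Q → ℕ} {V : Type} (φ : Fml D Q ar V) (ν : V → D) :
    Set (Interp D Q ar) :=
  {I | φ.Sat I ν ∧ ∀ J : Interp D Q ar, φ.Sat J ν → J.le I → J = I}


/-! ### Polarity lemmas (used to discharge positivity side conditions) -/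

namespace Fml

variable {D Q : Type} {ar : Q → ℕ}

theorem polarity_tt [Nonempty D] {V : Type} (_b : Bool) : (tt : Fml D Q ar V).Polarity _b :=
  trivial

theorem polarity_ff [Nonempty D] {V : Type} (_b : Bool) : (ff : Fml D Q ar V).Polarity _b :=
  trivial

theorem polarity_or {V : Type} {φ ψ : Fml D Q ar V} {b : Bool}
    (h1 : φ.Polarity b) (h2 : ψ.Polarity b) : (or φ ψ).Polarity b := by
  simpa [or, Polarity, Bool.not_not] using And.intro h1 h2

theorem polarity_conj [Nonempty D] {V : Type} :
    ∀ (l : List (Fml D Q ar V)) (b : Bool), (∀ φ ∈ l, φ.Polarity b) → (conj l).Polarity b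
  | [], _, _ => trivial
  | φ :: l, b, h =>
      ⟨h φ (List.mem_cons_self),
        polarity_conj l b fun ψ hψ => h ψ (List.mem_cons_of_mem _ hψ)⟩

theorem polarity_disj [Nonempty D] {V : Type} :
    ∀ (l : List (Fml D Q ar V)) (b : Bool), (∀ φ ∈ l, φ.Polarity b) → (disj l).Polarity b
  | [], _, _ => trivial
  | φ :: l, b, h =>
      polarity_or (h φ (List.mem_cons_self))
        (polarity_disj l b fun ψ hψ => h ψ (List.mem_cons_of_mem _ hψ))

theorem polarity_rename :
    ∀ {V W : Type} (f : V → W) (φ : Fml D Q ar V) (b : Bool),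
      φ.Polarity b → (φ.rename f).Polarity b
  | _, _, _, .eq _ _, _, _ => trivial
  | _, _, _, .pred _ _, _, hb => hb
  | _, _, f, .not φ, b, hb => polarity_rename f φ (!b) hb
  | _, _, f, .and φ ψ, b, hb =>
      ⟨polarity_rename f φ b hb.1, polarity_rename f ψ b hb.2⟩
  | _, _, f, .ex φ, b, hb => polarity_rename (Option.map f) φ b hb

theorem polarity_mapPred {Q' : Type} {ar' : Q' → ℕ} (f : Q → Q') (h : ∀ q, ar' (f q) = ar q) :
    ∀ {V : Type} (φ : Fml D Q ar V) (b : Bool), φ.Polarity b → (φ.mapPred f h).Polarity b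
  | _, .eq _ _, _, _ => trivial
  | _, .pred _ _, _, hb => hb
  | _, .not φ, b, hb => polarity_mapPred f h φ (!b) hb
  | _, .and φ ψ, b, hb =>
      ⟨polarity_mapPred f h φ b hb.1, polarity_mapPred f h ψ b hb.2⟩
  | _, .ex φ, b, hb => polarity_mapPred f h φ b hb

theorem polarity_dual :
    ∀ {V : Type} (φ : Fml D Q ar V) (b : Bool), φ.Polarity b → (φ.dual).Polarity b
  | _, .eq _ _, _, _ => trivial
  | _, .pred _ _, _, hb => hb
  | _, .not φ, b, hb => polarity_dual φ (!b) hb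
  | _, .and φ ψ, b, hb => by
      have h1 := polarity_dual φ b hb.1
      have h2 := polarity_dual ψ b hb.2
      simpa [dual, or, Polarity, Bool.not_not] using And.intro h1 h2
  | _, .ex φ, b, hb => by
      have h := polarity_dual φ b hb
      simpa [dual, Polarity, Bool.not_not] using h

end Fml

/-! ### First-order alternating automata -/

/-- Data words over input events `Sig` and input variables `X`. -/
abbrev DWord (Sig X D : Type) := List (Sig × (X → D))

/-- A first-order alternating automaton `A = ⟨Σ, X, Q, ι, F, Δ⟩`.  The (finitely many)
control predicates are the inhabitants of `Q`, enumerated by `QList`; there is exactly one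
transition rule `q(y₁,…,y_{#q}) →^{a(X)} δ q a` per pair `(q,a)` (several rules can be
joined by disjunction, a missing rule is an unsatisfiable one). -/
structure FOAA (Sig X D : Type) : Type 1 where
  Q : Type
  QList : List Q
  QList_mem : ∀ q : Q, q ∈ QList
  ar : Q → ℕ
  init : Fml D Q ar Empty
  init_pos : init.Positive
  F : Set Q
  delta : (q : Q) → Sig → Fml D Q ar (X ⊕ Fin (ar q))
  delta_pos : ∀ q a, (delta q a).Positive

namespace FOAA

variable {Sig X D : Type} (A : FOAA Sig X D)

abbrev Cfg := Config D A.Q A.ar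

/-- An execution of `A` over the data word `w`, starting with the cube `c`, represented as
the (prefix-closed) set of its paths of configurations.  The children of each node at
level `j < |w|` form a cube of a minimal model of the corresponding transition formula. -/
structure IsExec (w : DWord Sig X D) (c : Set A.Cfg) (T : Set (List A.Cfg)) : Prop where
  not_nil : [] ∉ T
  prefix_closed : ∀ p ∈ T, ∀ p' : List A.Cfg, p' ≠ [] → p' <+: p → p' ∈ T
  roots : {cf : A.Cfg | [cf] ∈ T} = c
  depth : ∀ p ∈ T, p.length ≤ w.length + 1
  children : ∀ (p : List A.Cfg) (q : A.Q) (d : Fin (A.ar q) → D),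
    p ++ [⟨q, d⟩] ∈ T → ∀ hl : p.length < w.length,
    ∃ I ∈ MinModels (A.delta q (w.get ⟨p.length, hl⟩).1)
        (Sum.elim (w.get ⟨p.length, hl⟩).2 d),
      {cf : A.Cfg | (p ++ [⟨q, d⟩]) ++ [cf] ∈ T} = I.cube

/-- An accepting execution: all paths have length `|w|` and the frontier is labeled with
final configurations. -/
structure IsAccExec (w : DWord Sig X D) (c : Set A.Cfg) (T : Set (List A.Cfg))
    extends A.IsExec w c T : Prop where
  total : ∀ p ∈ T, p.length ≤ w.length → ∃ cf : A.Cfg, p ++ [cf] ∈ T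
  final : ∀ (p : List A.Cfg) (q : A.Q) (d : Fin (A.ar q) → D),
    p ++ [⟨q, d⟩] ∈ T → p.length = w.length → q ∈ A.F

/-- `A` accepts `w` iff it has an accepting execution over `w` starting with a cube of a
minimal model of the initial sentence. -/
def Accepts (w : DWord Sig X D) : Prop :=
  ∃ I ∈ MinModels A.init (fun v : Empty => v.elim),
    ∃ T : Set (List A.Cfg), A.IsAccExec w I.cube T

def Lang : Set (DWord Sig X D) := {w | A.Accepts w}

end FOAA

/-! ### Time-stamping and path formulas -/

/-- Time-stamping of predicate symbols : `φ⁽ⁱ⁾`. -/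
def stampF {D Q : Type} {ar : Q → ℕ} (i : ℕ) :
    {V : Type} → Fml D Q ar V → Fml D (ℕ × Q) (fun p => ar p.2) V
  | _, .eq t s => .eq t s
  | _, .pred q ts => .pred (i, q) ts
  | _, .not φ => .not (stampF i φ)
  | _, .and φ ψ => .and (stampF i φ) (stampF i ψ)
  | _, .ex φ => .ex (stampF i φ)

/-- The valuation `w_D` of the time-stamped input variables `x⁽ⁱ⁾ ↦ νᵢ(x)`. -/
def wD {Sig X D : Type} [Nonempty D] (w : DWord Sig X D) : (ℕ × X) → D := fun p =>
  if h : 1 ≤ p.1 ∧ p.1 - 1 < w.length then (w.get ⟨p.1 - 1, h.2⟩).2 p.2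
  else Classical.arbitrary D

namespace FOAA

variable {Sig X D : Type} (A : FOAA Sig X D)

/-- The time-stamped right-hand side `ψ⁽ⁱ⁾` of the transition rule for `(q, a)`. -/
def ruleF (i : ℕ) (q : A.Q) (a : Sig) :
    Fml D (ℕ × A.Q) (fun p => A.ar p.2) ((ℕ × X) ⊕ Fin (A.ar q)) :=
  (stampF i (A.delta q a)).rename (Sum.map (fun x => (i, x)) id)

/-- `⋀_{q(ȳ) →^{a(X)} ψ ∈ Δ} ∀ȳ. q⁽ᵏ⁾(ȳ) → ψ⁽ᵏ⁺¹⁾`. -/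
def stepFml [Nonempty D] (k : ℕ) (a : Sig) :
    Fml D (ℕ × A.Q) (fun p => A.ar p.2) (ℕ × X) :=
  Fml.conj <| A.QList.map fun q =>
    Fml.allN (Fml.imp (.pred (k, q) fun i => .var (Sum.inr i)) (A.ruleF (k + 1) q a))

/-- `⋀_{q ∈ Q∖F} ∀ȳ. q⁽ⁿ⁾(ȳ) → ⊥`. -/
def finalFml [Nonempty D] (n : ℕ) : Fml D (ℕ × A.Q) (fun p => A.ar p.2) (ℕ × X) :=
  Fml.conj <| A.QList.map fun q =>
    if q ∈ A.F then Fml.tt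
    else Fml.allN (Fml.imp (.pred (n, q) fun i => .var (Sum.inr i)) Fml.ff)

/-- The path formula `Θ(α)`. -/
def theta [Nonempty D] (α : List Sig) : Fml D (ℕ × A.Q) (fun p => A.ar p.2) (ℕ × X) :=
  .and ((stampF 0 A.init).rename fun v : Empty => v.elim)
    (Fml.conj <| (List.finRange α.length).map fun j => A.stepFml j.val (α.get j))

/-- The acceptance formula `Υ(α)`. -/
def upsilon [Nonempty D] (α : List Sig) : Fml D (ℕ × A.Q) (fun p => A.ar p.2) (ℕ × X) :=
  .and (A.theta α) (A.finalFml α.length)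

/-- The interpretation `I_T` of the time-stamped predicates associated with an execution
(represented by its set of paths). -/
def execInterp (T : Set (List A.Cfg)) : Interp D (ℕ × A.Q) (fun p => A.ar p.2) :=
  fun p => {d | ∃ pf : List A.Cfg, pf.length = p.1 ∧ pf ++ [⟨p.2, d⟩] ∈ T}

end FOAA

/-! ### Predicate-free acceptance formulas `Φ̂(α)` -/

namespace FOAA

variable {Sig X D : Type} (A : FOAA Sig X D)

/-- `Φ̂ₙ(αᵢ)` for `i = α.length` : obtained from `ι⁽⁰⁾` by repeatedly substituting, for every
predicate atom `q⁽ⁱ⁻¹⁾(t̄)`, the formula `ψ⁽ⁱ⁾[t̄/ȳ]` of the corresponding transition rule.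
Since all predicate atoms of the `i`-th formula carry the stamp `i`, the stamps of
predicates are kept implicit. -/
def phiHatN [Nonempty D] (α : List Sig) : Fml D A.Q A.ar (ℕ × X) :=
  (List.finRange α.length).foldl
    (fun acc j =>
      Fml.substPred
        (fun q => (A.delta q (α.get j)).rename (Sum.map (fun x => (j.val + 1, x)) id))
        id acc)
    (A.init.rename fun v : Empty => v.elim)

/-- `Φ̂(α)` : additionally replace every remaining atom `q⁽ⁿ⁾(t̄)` by `⊥` if `q ∉ F` and by
`⊤` if `q ∈ F`.  The result contains no predicate symbols. -/
def phiHat [Nonempty D] (α : List Sig) :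
    Fml D Empty (fun e => e.elim) (ℕ × X) :=
  Fml.substPred (fun q => if q ∈ A.F then Fml.tt else Fml.ff) id (A.phiHatN α)

end FOAA

/-- The unique interpretation over an empty set of predicate symbols. -/
def emptyInterp (D : Type) : Interp D Empty (fun e => e.elim) := fun q => q.elim

/-! ### Size, intersection and complementation of automata -/

namespace FOAA

variable {Sig X D : Type}

/-- `|A| = |ι| + Σ_{rules} |ψ|`. -/
def size [Fintype Sig] (A : FOAA Sig X D) : ℕ :=
  A.init.size + (A.QList.map fun q => ∑ a : Sig, (A.delta q a).size).sum

/-- The intersection automaton `A∩` (disjointness of the predicate sets is modeled by a sum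
type). -/
def inter (A₁ A₂ : FOAA Sig X D) : FOAA Sig X D where
  Q := A₁.Q ⊕ A₂.Q
  QList := A₁.QList.map Sum.inl ++ A₂.QList.map Sum.inr
  QList_mem := by
    intro q
    cases q with
    | inl q => exact List.mem_append_left _ (List.mem_map_of_mem (A₁.QList_mem q))
    | inr q => exact List.mem_append_right _ (List.mem_map_of_mem (A₂.QList_mem q))
  ar := Sum.elim A₁.ar A₂.ar
  init := .and (Fml.mapPred Sum.inl (fun _ => rfl) A₁.init)
               (Fml.mapPred Sum.inr (fun _ => rfl) A₂.init)
  init_pos := by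
    exact ⟨Fml.polarity_mapPred (Q' := A₁.Q ⊕ A₂.Q) (ar' := Sum.elim A₁.ar A₂.ar)
        Sum.inl (fun _ => rfl) A₁.init true A₁.init_pos,
      Fml.polarity_mapPred (Q' := A₁.Q ⊕ A₂.Q) (ar' := Sum.elim A₁.ar A₂.ar)
        Sum.inr (fun _ => rfl) A₂.init true A₂.init_pos⟩
  F := Sum.inl '' A₁.F ∪ Sum.inr '' A₂.F
  delta := fun q a =>
    match q with
    | Sum.inl q₁ => Fml.mapPred Sum.inl (fun _ => rfl) (A₁.delta q₁ a)
    | Sum.inr q₂ => Fml.mapPred Sum.inr (fun _ => rfl) (A₂.delta q₂ a)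
  delta_pos := by
    intro q a
    cases q with
    | inl q₁ =>
        exact Fml.polarity_mapPred (Q' := A₁.Q ⊕ A₂.Q) (ar' := Sum.elim A₁.ar A₂.ar)
          Sum.inl (fun _ => rfl) (A₁.delta q₁ a) true (A₁.delta_pos q₁ a)
    | inr q₂ =>
        exact Fml.polarity_mapPred (Q' := A₁.Q ⊕ A₂.Q) (ar' := Sum.elim A₁.ar A₂.ar)
          Sum.inr (fun _ => rfl) (A₂.delta q₂ a) true (A₂.delta_pos q₂ a)

/-- The dual automaton `Ā`. -/
def dualA (A : FOAA Sig X D) : FOAA Sig X D where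
  Q := A.Q
  QList := A.QList
  QList_mem := A.QList_mem
  ar := A.ar
  init := A.init.dual
  init_pos := Fml.polarity_dual A.init true A.init_pos
  F := A.Fᶜ
  delta := fun q a => (A.delta q a).dual
  delta_pos := fun q a => Fml.polarity_dual (A.delta q a) true (A.delta_pos q a)

end FOAA

/-! ### Quantifier-free formulas and prenex forms -/

inductive QF (D Q : Type) (ar : Q → ℕ) (V : Type) : Type where
  | eq : Term D V → Term D V → QF D Q ar V
  | pred : (q : Q) → (Fin (ar q) → Term D V) → QF D Q ar V
  | not : QF D Q ar V → QF D Q ar V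
  | and : QF D Q ar V → QF D Q ar V → QF D Q ar V

namespace QF

variable {D Q : Type} {ar : Q → ℕ} {V W : Type}

def Sat (I : Interp D Q ar) : QF D Q ar V → (V → D) → Prop
  | .eq t s, ν => t.eval ν = s.eval ν
  | .pred q ts, ν => (fun i => (ts i).eval ν) ∈ I q
  | .not φ, ν => ¬ Sat I φ ν
  | .and φ ψ, ν => Sat I φ ν ∧ Sat I ψ ν

def rename (f : V → W) : QF D Q ar V → QF D Q ar W
  | .eq t s => .eq (t.rename f) (s.rename f)
  | .pred q ts => .pred q fun i => (ts i).rename f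
  | .not φ => .not (φ.rename f)
  | .and φ ψ => .and (φ.rename f) (ψ.rename f)

def subst (σ : V → Term D W) : QF D Q ar V → QF D Q ar W
  | .eq t s => .eq (t.subst σ) (s.subst σ)
  | .pred q ts => .pred q fun i => (ts i).subst σ
  | .not φ => .not (φ.subst σ)
  | .and φ ψ => .and (φ.subst σ) (ψ.subst σ)

def imp (φ ψ : QF D Q ar V) : QF D Q ar V := .not (.and φ (.not ψ))

def toFml : QF D Q ar V → Fml D Q ar V
  | .eq t s => .eq t s
  | .pred q ts => .pred q ts
  | .not φ => .not φ.toFml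
  | .and φ ψ => .and φ.toFml ψ.toFml

/-- The list of predicate atoms occurring in a quantifier-free formula. -/
def atoms : QF D Q ar V → List (Σ q : Q, Fin (ar q) → Term D V)
  | .eq _ _ => []
  | .pred q ts => [⟨q, ts⟩]
  | .not φ => φ.atoms
  | .and φ ψ => φ.atoms ++ ψ.atoms

def fv : QF D Q ar V → Set V
  | .eq t s => t.vars ∪ s.vars
  | .pred _ ts => ⋃ i, (ts i).vars
  | .not φ => φ.fv
  | .and φ ψ => φ.fv ∪ ψ.fv

def predsPol (b : Bool) : QF D Q ar V → Set Q
  | .eq _ _ => ∅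
  | .pred q _ => if b then {q} else ∅
  | .not φ => φ.predsPol (!b)
  | .and φ ψ => φ.predsPol b ∪ ψ.predsPol b

def Polarity : QF D Q ar V → Bool → Prop
  | .eq _ _, _ => True
  | .pred _ _, b => b = true
  | .not φ, b => φ.Polarity (!b)
  | .and φ ψ, b => φ.Polarity b ∧ ψ.Polarity b

def Positive (φ : QF D Q ar V) : Prop := φ.Polarity true

/-- In-place replacement of the atoms of predicate `q0` by instances of a formula. -/
def replaceAtom [DecidableEq Q] (q0 : Q) (χ : (Fin (ar q0) → Term D V) → Fml D Q ar V) :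
    QF D Q ar V → Fml D Q ar V
  | .eq t s => .eq t s
  | .pred q ts =>
      if h : q = q0 then χ (fun i => ts (Fin.cast (congrArg ar h.symm) i))
      else .pred q ts
  | .not φ => .not (replaceAtom q0 χ φ)
  | .and φ ψ => .and (replaceAtom q0 χ φ) (replaceAtom q0 χ ψ)

end QF

/-- Semantics of a quantifier prefix : the `j`-th entry of `pre` binds the prenex variable
of index `j` (`true` = ∃, `false` = ∀). -/
def quantSem {D : Type} : List Bool → ℕ → ((ℕ → D) → Prop) → (ℕ → D) → Prop
  | [], _, P, g => P g
  | b :: rest, j, P, g =>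
      if b then ∃ d : D, quantSem rest (j + 1) P (Function.update g j d)
      else ∀ d : D, quantSem rest (j + 1) P (Function.update g j d)

/-- A formula in prenex form: a quantifier prefix binding the prenex variables
(the `ℕ` summand of the variables of the matrix). -/
structure PF (D Q : Type) (ar : Q → ℕ) (V : Type) : Type where
  pre : List Bool
  mat : QF D Q ar (V ⊕ ℕ)

namespace PF

variable {D Q : Type} {ar : Q → ℕ} {V : Type}

def Sat [Nonempty D] (I : Interp D Q ar) (φ : PF D Q ar V) (ν : V → D) : Prop :=
  quantSem φ.pre 0 (fun g => φ.mat.Sat I (Sum.elim ν g)) fun _ => Classical.arbitrary D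

end PF

/-- Prenex normal form. -/
def prenex {D Q : Type} {ar : Q → ℕ} : {V : Type} → Fml D Q ar V → PF D Q ar V
  | _, .eq t s => ⟨[], .eq (t.rename Sum.inl) (s.rename Sum.inl)⟩
  | _, .pred q ts => ⟨[], .pred q fun i => (ts i).rename Sum.inl⟩
  | _, .not φ =>
      let p := prenex φ
      ⟨p.pre.map (!·), .not p.mat⟩
  | _, .and φ ψ =>
      let p := prenex φ
      let r := prenex ψ
      ⟨p.pre ++ r.pre, .and p.mat (r.mat.rename (Sum.map id (· + p.pre.length)))⟩
  | _, .ex φ =>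
      let p := prenex φ
      ⟨true :: p.pre,
        p.mat.rename fun v =>
          match v with
          | Sum.inl (some x) => Sum.inl x
          | Sum.inl none => Sum.inr 0
          | Sum.inr j => Sum.inr (j + 1)⟩

/-! ### The path-quantifier-eliminated acceptance formula `Θ̂(α)` -/

namespace FOAA

variable {Sig X D : Type} (A : FOAA Sig X D)

/-- One stage of the construction of `Θ̂ₙ` : conjoin, for every atom `q⁽ʲ⁾(t̄)` occurring in
the matrix so far, the instance `q⁽ʲ⁾(t̄) → ψ⁽ʲ⁺¹⁾[t̄/ȳ]` of the corresponding transition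
rule for the letter `a`, prenexing the transition quantifiers of `ψ` on the fly. -/
def stepPF (j : ℕ) (a : Sig) (Θ : PF D (ℕ × A.Q) (fun p => A.ar p.2) (ℕ × X)) :
    PF D (ℕ × A.Q) (fun p => A.ar p.2) (ℕ × X) :=
  (Θ.mat.atoms.filter fun atm => atm.1.1 == j).foldl
    (fun acc atm =>
      let pψ := prenex (A.ruleF (j + 1) atm.1.2 a)
      let m' : QF D (ℕ × A.Q) (fun p => A.ar p.2) ((ℕ × X) ⊕ ℕ) :=
        pψ.mat.subst fun v =>
          match v with
          | Sum.inl (Sum.inl x) => Term.var (Sum.inl x)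
          | Sum.inl (Sum.inr i) => atm.2 i
          | Sum.inr jj => Term.var (Sum.inr (jj + acc.pre.length))
      ⟨acc.pre ++ pψ.pre, .and acc.mat (QF.imp (.pred atm.1 atm.2) m')⟩)
    Θ

/-- `Θ̂ₙ(αᵢ)` for a prefix length `i ≤ |α|`. -/
def thetaHatStage (α : List Sig) (i : ℕ) : PF D (ℕ × A.Q) (fun p => A.ar p.2) (ℕ × X) :=
  ((List.finRange α.length).take i).foldl
    (fun acc j => A.stepPF j.val (α.get j) acc)
    (prenex ((stampF 0 A.init).rename fun v : Empty => v.elim))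

/-- `Θ̂ₙ(αₙ)`. -/
def thetaHatN (α : List Sig) : PF D (ℕ × A.Q) (fun p => A.ar p.2) (ℕ × X) :=
  A.thetaHatStage α α.length

/-- `Θ̂(α)`, in prenex form : `Θ̂ₙ(αₙ)` conjoined with the instances
`q⁽ⁿ⁾(t̄) → ⊥` for the occurring atoms with `q ∈ Q∖F`. -/
def thetaHat [Nonempty D] (α : List Sig) : PF D (ℕ × A.Q) (fun p => A.ar p.2) (ℕ × X) :=
  let Θ := A.thetaHatN α
  ⟨Θ.pre,
    (Θ.mat.atoms.filter fun atm => atm.1.1 == α.length).foldl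
      (fun m atm =>
        if atm.1.2 ∈ A.F then m
        else .and m (QF.imp (.pred atm.1 atm.2)
          (.not (.eq (Term.const (Classical.arbitrary D)) (Term.const (Classical.arbitrary D))))))
      Θ.mat⟩

/-- The length of the quantifier prefix of `Θ̂ₙ(αᵢ)`. -/
def stagePreLen (α : List Sig) (i : ℕ) : ℕ := (A.thetaHatStage α i).pre.length

/-- `ξ` : the monotonic function mapping each transition quantifier of `Θ̂(α)` to the
minimal stage of the sequence `Θ̂ₙ(α₀), …, Θ̂ₙ(αₙ)` where it occurs. -/
def xi (α : List Sig) (j : ℕ) : ℕ := sInf {i : ℕ | j < A.stagePreLen α i}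

/-- `ξ⁻¹max(k)` : the maximal quantifier index mapped by `ξ` to the stage `k`. -/
def xiInvMax (α : List Sig) (k : ℕ) : ℕ :=
  sSup {j : ℕ | j < (A.thetaHatN α).pre.length ∧ A.xi α j = k}

end FOAA

/-! ### Generalized Lyndon interpolants -/

namespace FOAA

variable {Sig X D : Type} (A : FOAA Sig X D)

/-- A generalized Lyndon interpolant (GLI) for the input event sequence `α`;
the formulas `Is k` live over an ambient variable type `W` into which the time-stamped
input variables are embedded by `ρ`. -/
structure IsGLI [Nonempty D] (α : List Sig) {W : Type} (ρ : (ℕ × X) → W)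
    (Is : ℕ → Fml D (ℕ × A.Q) (fun p => A.ar p.2) W) : Prop where
  neg_free : ∀ k ≤ α.length, (Is k).predsPol false = ∅
  init_entail : ∀ (I : Interp D (ℕ × A.Q) (fun p => A.ar p.2)) (ν : W → D),
    (((stampF 0 A.init).rename (fun v : Empty => v.elim) : Fml D (ℕ × A.Q) _ W)).Sat I ν →
    (Is 0).Sat I ν
  step_entail : ∀ (k : Fin α.length) (I : Interp D (ℕ × A.Q) (fun p => A.ar p.2)) (ν : W → D),
    (Is k.val).Sat I ν → ((A.stepFml k.val (α.get k)).rename ρ).Sat I ν →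
    (Is (k.val + 1)).Sat I ν
  final_unsat : ¬ ∃ (I : Interp D (ℕ × A.Q) (fun p => A.ar p.2)) (ν : W → D),
    (Is α.length).Sat I ν ∧ ((A.finalFml α.length).rename ρ).Sat I ν

/-! ### Unfoldings -/

/-- `⋀_{q ∈ Q∖F} ∀ȳ. q(ȳ) → ⊥` over the plain (un-stamped) signature. -/
def finalConstraint [Nonempty D] : Fml D A.Q A.ar Empty :=
  Fml.conj <| A.QList.map fun q =>
    if q ∈ A.F then Fml.tt
    else Fml.allN (Fml.imp (.pred q fun i => .var (Sum.inr i)) Fml.ff)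

/-- An unfolding of `A` : a finite, prefix-closed and complete set `dom ⊆ Σ*` labeled with
positive sentences, compatible with the transition relation. -/
structure IsUnfolding [Nonempty D] (dom : Set (List Sig))
    (lab : List Sig → Fml D A.Q A.ar Empty) : Prop where
  finite : dom.Finite
  prefix_closed : ∀ α ∈ dom, ∀ β : List Sig, β <+: α → β ∈ dom
  complete : ∀ α ∈ dom, ∃ a : Sig, ((α ++ [a]) ∈ dom ↔ ∀ b : Sig, α ++ [b] ∈ dom)
  pos : ∀ α ∈ dom, (lab α).Positive
  init_lab : ∀ (I : Interp D A.Q A.ar) (ν : Empty → D), (lab []).Sat I ν ↔ A.init.Sat I ν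
  step : ∀ α ∈ dom, ∀ a : Sig, (α ++ [a]) ∈ dom →
    ∀ (I : Interp D (ℕ × A.Q) (fun p => A.ar p.2)) (ν : (ℕ × X) → D),
      (((stampF 0 (lab α)).rename (fun v : Empty => v.elim) :
          Fml D (ℕ × A.Q) _ (ℕ × X))).Sat I ν →
      (A.stepFml 0 a).Sat I ν →
      (((stampF 1 (lab (α ++ [a]))).rename (fun v : Empty => v.elim) :
          Fml D (ℕ × A.Q) _ (ℕ × X))).Sat I ν

/-- A safe unfolding. -/
def UnfSafe [Nonempty D] (dom : Set (List Sig))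
    (lab : List Sig → Fml D A.Q A.ar Empty) : Prop :=
  ∀ α ∈ dom, ¬ ∃ (I : Interp D A.Q A.ar) (ν : Empty → D),
    (lab α).Sat I ν ∧ (A.finalConstraint).Sat I ν

/-- `α` is covered by `β`. -/
def Covers (dom : Set (List Sig)) (lab : List Sig → Fml D A.Q A.ar Empty)
    (α β : List Sig) : Prop :=
  β ∈ dom ∧ ∃ α' : List Sig, α' <+: α ∧ α' ∈ dom ∧
    ∀ (I : Interp D A.Q A.ar) (ν : Empty → D), (lab α').Sat I ν → (lab β).Sat I ν

def CoveredNode (dom : Set (List Sig)) (lab : List Sig → Fml D A.Q A.ar Empty)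
    (α : List Sig) : Prop :=
  ∃ β, A.Covers dom lab α β

/-- A closed unfolding : every leaf is covered by an uncovered node. -/
def UnfClosed (dom : Set (List Sig)) (lab : List Sig → Fml D A.Q A.ar Empty) : Prop :=
  ∀ α ∈ dom, (∀ a : Sig, (α ++ [a]) ∉ dom) →
    ∃ β, A.Covers dom lab α β ∧ ¬ A.CoveredNode dom lab β

end FOAA

/-- Existentially quantify the (finitely many) variables listed in `L`, yielding a
sentence. -/
def exClose {D Q : Type} {ar : Q → ℕ} [Nonempty D] {V : Type} [DecidableEq V]
    (L : List V) (φ : Fml D Q ar V) : Fml D Q ar Empty :=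
  Fml.exN (k := L.length)
    (φ.substVar fun v =>
      if hv : v ∈ L then Term.var (Sum.inr ⟨L.idxOf v, List.idxOf_lt_length_iff.mpr hv⟩)
      else Term.const (Classical.arbitrary D))

/-! ### Timed automata -/

/-- Clock constraints over `k` clocks. -/
inductive CC (k : ℕ) : Type where
  | le : Fin k → ℚ → CC k
  | ge : Fin k → ℚ → CC k
  | not : CC k → CC k
  | and : CC k → CC k → CC k

namespace CC

def sat {k : ℕ} (γ : Fin k → ℝ) : CC k → Prop
  | .le i c => γ i ≤ (c : ℝ)
  | .ge i c => (c : ℝ) ≤ γ i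
  | .not δ => ¬ sat γ δ
  | .and δ₁ δ₂ => sat γ δ₁ ∧ sat γ δ₂

/-- Translate a clock constraint into a first-order formula over ℝ, applied to the given
argument terms (the order relations are expressed via interpreted functions and equality
atoms). -/
def toFml {k : ℕ} {Q : Type} {ar : Q → ℕ} {V : Type} :
    CC k → (Fin k → Term ℝ V) → Fml ℝ Q ar V
  | .le i c, args =>
      .eq (Term.app (n := 1) (fun v => if v 0 ≤ (c : ℝ) then 1 else 0) ![args i])
        (Term.const 1)
  | .ge i c, args =>
      .eq (Term.app (n := 1) (fun v => if (c : ℝ) ≤ v 0 then 1 else 0) ![args i])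
        (Term.const 1)
  | .not δ, args => .not (δ.toFml args)
  | .and δ₁ δ₂, args => .and (δ₁.toFml args) (δ₂.toFml args)

/-- `CC.toFml` contains no predicate symbols, hence has any polarity. -/
theorem polarity_toFml {k : ℕ} {Q : Type} {ar : Q → ℕ} {V : Type} :
    ∀ (δ : CC k) (args : Fin k → Term ℝ V) (b : Bool),
      (δ.toFml (Q := Q) (ar := ar) args).Polarity b
  | .le _ _, _, _ => trivial
  | .ge _ _, _, _ => trivial
  | .not δ, args, b => polarity_toFml δ args (!b)
  | .and δ₁ δ₂, args, b => ⟨polarity_toFml δ₁ args b, polarity_toFml δ₂ args b⟩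

end CC

/-- A timed automaton with `k` clocks. -/
structure TimedAuto (Sig : Type) (k : ℕ) : Type 1 where
  S : Type
  SList : List S
  SList_mem : ∀ s : S, s ∈ SList
  S0 : Set S
  F : Set S
  E : List (S × Sig × S × Set (Fin k) × CC k)

/-- `τᵢ` : the time stamp before the `i`-th step (`τ₀ = 0`). -/
def timeAt {Sig : Type} (w : List (Sig × ℝ)) : ℕ → ℝ
  | 0 => 0
  | i + 1 => (w.map Prod.snd).getD i 0

/-- `0 ≤ τ₁ < τ₂ < …`. -/
def IsTimedWord {Sig : Type} (w : List (Sig × ℝ)) : Prop :=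
  (∀ h : 0 < w.length, 0 ≤ (w.get ⟨0, h⟩).2) ∧
    List.Chain' (· < ·) (w.map Prod.snd)

namespace TimedAuto

variable {Sig : Type} {k : ℕ} (T : TimedAuto Sig k)

/-- `T` has an accepting run over the timed word `w`. -/
def Accepts (w : List (Sig × ℝ)) : Prop :=
  ∃ r : ℕ → T.S × (Fin k → ℝ),
    (r 0).1 ∈ T.S0 ∧ ((r 0).2 = fun _ => 0) ∧
    (∀ i : Fin w.length,
      ∃ e ∈ T.E,
        e.1 = (r i.val).1 ∧ e.2.1 = (w.get i).1 ∧ e.2.2.1 = (r (i.val + 1)).1 ∧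
        CC.sat (fun c => (r i.val).2 c + (timeAt w (i.val + 1) - timeAt w i.val))
          e.2.2.2.2 ∧
        ∀ c : Fin k, (r (i.val + 1)).2 c =
          if c ∈ e.2.2.2.1 then 0
          else (r i.val).2 c + (timeAt w (i.val + 1) - timeAt w i.val)) ∧
    (r w.length).1 ∈ T.F

def Lang : Set (List (Sig × ℝ)) := {w | IsTimedWord w ∧ T.Accepts w}

/-- The first-order alternating automaton `A_T` associated with a timed automaton `T` :
predicates of arity `k+1` (the `k` values `yᵢ` tracking `t − xᵢ` plus the time stamp `z`
of the previous event), one input variable `t`. -/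
def toFOAA : FOAA Sig Unit ℝ where
  Q := T.S
  QList := T.SList
  QList_mem := T.SList_mem
  ar := fun _ => k + 1
  init := Fml.disj <|
    (T.SList.filter fun s => decide (s ∈ T.S0)).map fun s =>
      .pred s fun _ => Term.const 0
  init_pos := by
    apply Fml.polarity_disj
    intro φ hφ
    simp only [List.mem_map] at hφ
    obtain ⟨s, -, rfl⟩ := hφ
    exact rfl
  F := T.F
  delta := fun s a =>
    Fml.disj <|
      (T.E.filter fun e => decide (e.1 = s ∧ e.2.1 = a)).map fun e =>
        .and
          (.eq (Term.app (n := 2) (fun v => if v 0 < v 1 then 1 else 0)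
              ![Term.var (Sum.inr (Fin.last k)), Term.var (Sum.inl ())])
            (Term.const 1))
          (.and
            (e.2.2.2.2.toFml fun i =>
              Term.app (n := 2) (fun v => v 0 - v 1)
                ![Term.var (Sum.inr (Fin.last k)), Term.var (Sum.inr i.castSucc)])
            (.pred e.2.2.1 fun i =>
              Fin.lastCases (Term.var (Sum.inl ()))
                (fun c =>
                  if c ∈ e.2.2.2.1 then Term.var (Sum.inr (Fin.last k))
                  else Term.var (Sum.inr c.castSucc))
                i))
  delta_pos := by
    intro s a
    apply Fml.polarity_disj
    intro φ hφ
    simp only [List.mem_map] at hφ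
    obtain ⟨e, -, rfl⟩ := hφ
    exact ⟨trivial, CC.polarity_toFml _ _ true, rfl⟩

end TimedAuto

/-- The encoding `d(w)` of a timed word as a data word. -/
def encodeTimed {Sig : Type} (w : List (Sig × ℝ)) : DWord Sig Unit ℝ :=
  w.map fun p => (p.1, fun _ => p.2)

/-! ### Register automata -/

/-- A finite-memory (register) automaton with `r` registers over the infinite alphabet `A`;
`none` plays the role of the symbol `#`. -/
structure RegAuto (A : Type) (r : ℕ) : Type 1 where
  S : Type
  SList : List S
  SList_mem : ∀ s : S, s ∈ SList
  s0 : S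
  u0 : Fin r → Option A
  u0_distinct : ∀ i j : Fin r, i ≠ j → u0 i = u0 j → u0 i = none
  rho : S → Option (Fin r)
  mu : List (S × Fin r × S)
  F : Set S

namespace RegAuto

variable {A : Type} {r : ℕ} (R : RegAuto A r)

def Accepts (word : List A) : Prop :=
  ∃ v : ℕ → R.S × (Fin r → Option A),
    v 0 = (R.s0, R.u0) ∧
    (∀ i : Fin word.length,
      ((∃ kk : Fin r, (v i.val).2 kk = some (word.get i) ∧
          (v (i.val + 1)).2 = (v i.val).2 ∧
          ((v i.val).1, kk, (v (i.val + 1)).1) ∈ R.mu) ∨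
        ((∀ kk : Fin r, (v i.val).2 kk ≠ some (word.get i)) ∧
          ∃ kk : Fin r, R.rho (v i.val).1 = some kk ∧
            (v (i.val + 1)).2 kk = some (word.get i) ∧
            (∀ kk' : Fin r, kk' ≠ kk → (v (i.val + 1)).2 kk' = (v i.val).2 kk') ∧
            ((v i.val).1, kk, (v (i.val + 1)).1) ∈ R.mu))) ∧
    (v word.length).1 ∈ R.F

def Lang : Set (List A) := {u | R.Accepts u}

/-- The first-order alternating automaton `A_R` associated with a register automaton `R` :
a single input event, one input variable `x`, predicates of arity `r`, over the data
domain `Option A` (where `none` encodes `#`). -/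
def toFOAA : FOAA Unit Unit (Option A) where
  Q := R.S
  QList := R.SList
  QList_mem := R.SList_mem
  ar := fun _ => r
  init := .pred R.s0 fun i => Term.const (R.u0 i)
  init_pos := rfl
  F := R.F
  delta := fun s _ =>
    Fml.disj <|
      (R.mu.filter fun m => decide (m.1 = s)).map fun m =>
        Fml.or
          (.and (.eq (Term.var (Sum.inr m.2.1)) (Term.var (Sum.inl ())))
            (.pred m.2.2 fun i => Term.var (Sum.inr i)))
          (.and
            (Fml.conj <| (List.finRange r).map fun i =>
              .not (.eq (Term.var (Sum.inl ())) (Term.var (Sum.inr i))))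
            (.pred m.2.2 fun i =>
              if i = m.2.1 then Term.var (Sum.inl ()) else Term.var (Sum.inr i)))
  delta_pos := by
    intro s a
    apply Fml.polarity_disj
    intro φ hφ
    simp only [List.mem_map] at hφ
    obtain ⟨m, -, rfl⟩ := hφ
    refine Fml.polarity_or ⟨trivial, rfl⟩ ⟨?_, rfl⟩
    apply Fml.polarity_conj
    intro ψ hψ
    simp only [List.mem_map] at hψ
    obtain ⟨i, -, rfl⟩ := hψ
    exact trivial

end RegAuto

/-- The encoding of a word over the alphabet `A` as a data word. -/
def encodeReg {A : Type} (u : List A) : DWord Unit Unit (Option A) :=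
  u.map fun a => ((), fun _ => some a)

end FOADA

namespace FOADA

/-! ### Auxiliary semantic lemmas -/

namespace Term

variable {D V W : Type}

theorem eval_rename (f : V → W) (ν : W → D) :
    ∀ t : Term D V, (t.rename f).eval ν = t.eval (ν ∘ f)
  | .var v => rfl
  | .app g ts => congrArg g (funext fun i => eval_rename f ν (ts i))

theorem eval_subst (σ : V → Term D W) (ν : W → D) :
    ∀ t : Term D V, (t.subst σ).eval ν = t.eval fun v => (σ v).eval ν
  | .var v => rfl
  | .app g ts => congrArg g (funext fun i => eval_subst σ ν (ts i))

theorem eval_congr {ν ν' : V → D} :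
    ∀ t : Term D V, (∀ v ∈ t.vars, ν v = ν' v) → t.eval ν = t.eval ν'
  | .var v, h => h v rfl
  | .app g ts, h => congrArg g (funext fun i =>
      eval_congr (ts i) fun v hv => h v (Set.mem_iUnion.2 ⟨i, hv⟩))

theorem vars_rename (f : V → W) :
    ∀ (t : Term D V) (w : W), w ∈ (t.rename f).vars → ∃ v ∈ t.vars, f v = w
  | .var v, w, hw => ⟨v, rfl, hw.symm⟩
  | .app g ts, w, hw => by
      obtain ⟨i, hi⟩ := Set.mem_iUnion.1 hw
      obtain ⟨v, hv, rfl⟩ := vars_rename f (ts i) w hi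
      exact ⟨v, Set.mem_iUnion.2 ⟨i, hv⟩, rfl⟩

theorem vars_subst (σ : V → Term D W) :
    ∀ (t : Term D V) (w : W), w ∈ (t.subst σ).vars → ∃ v ∈ t.vars, w ∈ (σ v).vars
  | .var v, w, hw => ⟨v, rfl, hw⟩
  | .app g ts, w, hw => by
      obtain ⟨i, hi⟩ := Set.mem_iUnion.1 hw
      obtain ⟨v, hv, hw'⟩ := vars_subst σ (ts i) w hi
      exact ⟨v, Set.mem_iUnion.2 ⟨i, hv⟩, hw'⟩

end Term

namespace QF

variable {D Q : Type} {ar : Q → ℕ} {V W : Type} {I : Interp D Q ar}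

theorem sat_subst (σ : V → Term D W) :
    ∀ (φ : QF D Q ar V) (ν : W → D),
      (φ.subst σ).Sat I ν ↔ φ.Sat I fun v => (σ v).eval ν
  | .eq t s, ν => by simp [QF.subst, QF.Sat, Term.eval_subst]
  | .pred q ts, ν => by simp [QF.subst, QF.Sat, Term.eval_subst]
  | .not φ, ν => by simp [QF.subst, QF.Sat, sat_subst σ φ ν]
  | .and φ ψ, ν => by simp [QF.subst, QF.Sat, sat_subst σ φ ν, sat_subst σ ψ ν]

theorem sat_rename (f : V → W) :
    ∀ (φ : QF D Q ar V) (ν : W → D), (φ.rename f).Sat I ν ↔ φ.Sat I (ν ∘ f)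
  | .eq t s, ν => by simp [QF.rename, QF.Sat, Term.eval_rename]
  | .pred q ts, ν => by simp [QF.rename, QF.Sat, Term.eval_rename]
  | .not φ, ν => by simp [QF.rename, QF.Sat, sat_rename f φ ν]
  | .and φ ψ, ν => by simp [QF.rename, QF.Sat, sat_rename f φ ν, sat_rename f ψ ν]

theorem sat_congr {ν ν' : V → D} :
    ∀ φ : QF D Q ar V, (∀ v ∈ φ.fv, ν v = ν' v) → (φ.Sat I ν ↔ φ.Sat I ν')
  | .eq t s, h => by
      simp only [QF.Sat]
      rw [Term.eval_congr t fun v hv => h v (Or.inl hv),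
        Term.eval_congr s fun v hv => h v (Or.inr hv)]
  | .pred q ts, h => by
      simp only [QF.Sat]
      have : (fun i => (ts i).eval ν) = fun i => (ts i).eval ν' := funext fun i =>
        Term.eval_congr (ts i) fun v hv => h v (Set.mem_iUnion.2 ⟨i, hv⟩)
      rw [this]
  | .not φ, h => by simp only [QF.Sat]; rw [sat_congr φ h]
  | .and φ ψ, h => by
      simp only [QF.Sat]
      rw [sat_congr φ fun v hv => h v (Or.inl hv),
        sat_congr ψ fun v hv => h v (Or.inr hv)]

theorem fv_rename (f : V → W) :
    ∀ (φ : QF D Q ar V) (w : W), w ∈ (φ.rename f).fv → ∃ v ∈ φ.fv, f v = w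
  | .eq t s, w, hw => by
      rcases hw with hw | hw
      · obtain ⟨v, hv, rfl⟩ := Term.vars_rename f t w hw
        exact ⟨v, Or.inl hv, rfl⟩
      · obtain ⟨v, hv, rfl⟩ := Term.vars_rename f s w hw
        exact ⟨v, Or.inr hv, rfl⟩
  | .pred q ts, w, hw => by
      obtain ⟨i, hi⟩ := Set.mem_iUnion.1 hw
      obtain ⟨v, hv, rfl⟩ := Term.vars_rename f (ts i) w hi
      exact ⟨v, Set.mem_iUnion.2 ⟨i, hv⟩, rfl⟩
  | .not φ, w, hw => fv_rename f φ w hw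
  | .and φ ψ, w, hw => by
      rcases hw with hw | hw
      · obtain ⟨v, hv, rfl⟩ := fv_rename f φ w hw
        exact ⟨v, Or.inl hv, rfl⟩
      · obtain ⟨v, hv, rfl⟩ := fv_rename f ψ w hw
        exact ⟨v, Or.inr hv, rfl⟩

theorem fv_subst (σ : V → Term D W) :
    ∀ (φ : QF D Q ar V) (w : W), w ∈ (φ.subst σ).fv → ∃ v ∈ φ.fv, w ∈ (σ v).vars
  | .eq t s, w, hw => by
      rcases hw with hw | hw
      · obtain ⟨v, hv, hw'⟩ := Term.vars_subst σ t w hw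
        exact ⟨v, Or.inl hv, hw'⟩
      · obtain ⟨v, hv, hw'⟩ := Term.vars_subst σ s w hw
        exact ⟨v, Or.inr hv, hw'⟩
  | .pred q ts, w, hw => by
      obtain ⟨i, hi⟩ := Set.mem_iUnion.1 hw
      obtain ⟨v, hv, hw'⟩ := Term.vars_subst σ (ts i) w hi
      exact ⟨v, Set.mem_iUnion.2 ⟨i, hv⟩, hw'⟩
  | .not φ, w, hw => fv_subst σ φ w hw
  | .and φ ψ, w, hw => by
      rcases hw with hw | hw
      · obtain ⟨v, hv, hw'⟩ := fv_subst σ φ w hw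
        exact ⟨v, Or.inl hv, hw'⟩
      · obtain ⟨v, hv, hw'⟩ := fv_subst σ ψ w hw
        exact ⟨v, Or.inr hv, hw'⟩

theorem atoms_fv :
    ∀ (φ : QF D Q ar V) (atm : Σ q : Q, Fin (ar q) → Term D V), atm ∈ φ.atoms →
      ∀ (i : Fin (ar atm.1)) (v : V), v ∈ (atm.2 i).vars → v ∈ φ.fv
  | .eq _ _, _, h => by simp [QF.atoms] at h
  | .pred q ts, atm, h => by
      simp only [QF.atoms, List.mem_singleton] at h
      subst h
      exact fun i v hv => Set.mem_iUnion.2 ⟨i, hv⟩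
  | .not φ, atm, h => atoms_fv φ atm h
  | .and φ ψ, atm, h => by
      rcases List.mem_append.1 h with h | h
      · exact fun i v hv => Or.inl (atoms_fv φ atm h i v hv)
      · exact fun i v hv => Or.inr (atoms_fv ψ atm h i v hv)

theorem sat_imp {φ ψ : QF D Q ar V} {ν : V → D} :
    (QF.imp φ ψ).Sat I ν ↔ (φ.Sat I ν → ψ.Sat I ν) := by
  simp [QF.imp, QF.Sat, not_and, not_not]

end QF

namespace Fml

variable {D Q : Type} {ar : Q → ℕ} {I : Interp D Q ar}

theorem sat_rename :
    ∀ {V W : Type} (f : V → W) (φ : Fml D Q ar V) (ν : W → D),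
      (φ.rename f).Sat I ν ↔ φ.Sat I (ν ∘ f)
  | _, _, f, .eq t s, ν => by simp [Fml.rename, Fml.Sat, Term.eval_rename]
  | _, _, f, .pred q ts, ν => by simp [Fml.rename, Fml.Sat, Term.eval_rename]
  | _, _, f, .not φ, ν => by simp [Fml.rename, Fml.Sat, sat_rename f φ ν]
  | _, _, f, .and φ ψ, ν => by
      simp [Fml.rename, Fml.Sat, sat_rename f φ ν, sat_rename f ψ ν]
  | _, _, f, .ex φ, ν => by
      simp only [Fml.rename, Fml.Sat]
      refine exists_congr fun d => ?_
      rw [sat_rename (Option.map f) φ]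
      have : ((fun o => Option.elim o d ν) ∘ Option.map f) =
          fun o => Option.elim o d (ν ∘ f) := by
        funext o; cases o <;> rfl
      rw [this]

theorem sat_tt [Nonempty D] {V : Type} {ν : V → D} : (Fml.tt : Fml D Q ar V).Sat I ν := rfl

theorem not_sat_ff [Nonempty D] {V : Type} {ν : V → D} :
    ¬ (Fml.ff : Fml D Q ar V).Sat I ν := fun h => h rfl

theorem sat_conj [Nonempty D] {V : Type} {ν : V → D} :
    ∀ l : List (Fml D Q ar V), (Fml.conj l).Sat I ν ↔ ∀ φ ∈ l, φ.Sat I ν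
  | [] => by simp [Fml.conj]; exact sat_tt
  | φ :: l => by
      simp only [Fml.conj, Fml.Sat, sat_conj l, List.mem_cons]
      constructor
      · rintro ⟨h1, h2⟩ ψ (rfl | hψ)
        · exact h1
        · exact h2 ψ hψ
      · intro h
        exact ⟨h φ (Or.inl rfl), fun ψ hψ => h ψ (Or.inr hψ)⟩

theorem sat_imp {V : Type} {φ ψ : Fml D Q ar V} {ν : V → D} :
    (Fml.imp φ ψ).Sat I ν ↔ (φ.Sat I ν → ψ.Sat I ν) := by
  simp [Fml.imp, Fml.Sat, not_and, not_not]

theorem sat_exN :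
    ∀ {V : Type} {k : ℕ} (φ : Fml D Q ar (V ⊕ Fin k)) (ν : V → D),
      (Fml.exN φ).Sat I ν ↔ ∃ d : Fin k → D, φ.Sat I (Sum.elim ν d)
  | _, 0, φ, ν => by
      simp only [Fml.exN]
      rw [sat_rename]
      constructor
      · intro h
        refine ⟨Fin.elim0, ?_⟩
        convert h using 1
        funext v; rcases v with v | i
        · rfl
        · exact i.elim0
      · rintro ⟨d, h⟩
        convert h using 1
        funext v; rcases v with v | i
        · rfl
        · exact i.elim0
  | _, k + 1, φ, ν => by
      rw [Fml.exN, sat_exN]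
      constructor
      · rintro ⟨d, d0, h⟩
        rw [sat_rename] at h
        refine ⟨Fin.snoc d d0, ?_⟩
        convert h using 1
        funext v; rcases v with v | j
        · rfl
        · induction j using Fin.lastCases with
          | last => simp [Fin.snoc_last]
          | cast i => simp [Fin.snoc_castSucc]
      · rintro ⟨e, h⟩
        refine ⟨fun i => e i.castSucc, e (Fin.last k), ?_⟩
        rw [sat_rename]
        convert h using 1
        funext v; rcases v with v | j
        · rfl
        · induction j using Fin.lastCases with
          | last => simp
          | cast i => simp

theorem sat_allN {V : Type} {k : ℕ} (φ : Fml D Q ar (V ⊕ Fin k)) (ν : V → D) :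
    (Fml.allN φ).Sat I ν ↔ ∀ d : Fin k → D, φ.Sat I (Sum.elim ν d) := by
  simp only [Fml.allN]
  show ¬ (Fml.exN (.not φ)).Sat I ν ↔ _
  rw [sat_exN]
  simp [Fml.Sat, not_exists, not_not]

end Fml

section QuantSem

variable {D : Type}

theorem quantSem_mono_on :
    ∀ (pre : List Bool) (j : ℕ) (P P' : (ℕ → D) → Prop) (g : ℕ → D),
      (∀ g' : ℕ → D, (∀ i, i < j ∨ j + pre.length ≤ i → g' i = g i) → P g' → P' g') →
      quantSem pre j P g → quantSem pre j P' g
  | [], j, P, P', g, h, hq => h g (fun _ _ => rfl) hq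
  | b :: rest, j, P, P', g, h, hq => by
      have key : ∀ d : D,
          quantSem rest (j + 1) P (Function.update g j d) →
          quantSem rest (j + 1) P' (Function.update g j d) := by
        intro d
        refine quantSem_mono_on rest (j + 1) P P' (Function.update g j d) ?_
        intro g' hg' hP
        refine h g' ?_ hP
        intro i hi
        simp only [List.length_cons] at hi
        have hij : i ≠ j := by omega
        have : g' i = Function.update g j d i := by
          apply hg'
          omega
        rw [this, Function.update_of_ne hij]
      simp only [quantSem] at hq ⊢
      cases b with
      | true =>
          simp only [if_true] at hq ⊢
          obtain ⟨d, hd⟩ := hq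
          exact ⟨d, key d hd⟩
      | false =>
          simp only [Bool.false_eq_true, if_false] at hq ⊢
          exact fun d => key d (hq d)

theorem quantSem_out [Nonempty D] {C : Prop} :
    ∀ (pre : List Bool) (j : ℕ) (P : (ℕ → D) → Prop) (g : ℕ → D),
      (∀ g' : ℕ → D, (∀ i, i < j ∨ j + pre.length ≤ i → g' i = g i) → P g' → C) →
      quantSem pre j P g → C
  | [], j, P, g, h, hq => h g (fun _ _ => rfl) hq
  | b :: rest, j, P, g, h, hq => by
      have key : ∀ d : D, quantSem rest (j + 1) P (Function.update g j d) → C := by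
        intro d
        refine quantSem_out rest (j + 1) P (Function.update g j d) ?_
        intro g' hg' hP
        refine h g' ?_ hP
        intro i hi
        simp only [List.length_cons] at hi
        have hij : i ≠ j := by omega
        have : g' i = Function.update g j d i := by
          apply hg'
          omega
        rw [this, Function.update_of_ne hij]
      simp only [quantSem] at hq
      cases b with
      | true =>
          simp only [if_true] at hq
          obtain ⟨d, hd⟩ := hq
          exact key d hd
      | false =>
          simp only [Bool.false_eq_true, if_false] at hq
          exact key (Classical.arbitrary D) (hq _)

theorem quantSem_intro [Nonempty D] :
    ∀ (pre : List Bool) (j : ℕ) (P : (ℕ → D) → Prop) (g : ℕ → D),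
      (∀ g' : ℕ → D, (∀ i, i < j ∨ j + pre.length ≤ i → g' i = g i) → P g') →
      quantSem pre j P g
  | [], j, P, g, h => h g (fun _ _ => rfl)
  | b :: rest, j, P, g, h => by
      have key : ∀ d : D, quantSem rest (j + 1) P (Function.update g j d) := by
        intro d
        refine quantSem_intro rest (j + 1) P (Function.update g j d) ?_
        intro g' hg'
        refine h g' ?_
        intro i hi
        simp only [List.length_cons] at hi
        have hij : i ≠ j := by omega
        have : g' i = Function.update g j d i := by
          apply hg'
          omega
        rw [this, Function.update_of_ne hij]
      simp only [quantSem]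
      cases b with
      | true => exact if_pos rfl ▸ ⟨Classical.arbitrary D, key _⟩
      | false =>
          simp only [Bool.false_eq_true, if_false]
          exact key

theorem quantSem_iff_on (pre : List Bool) (j : ℕ) (P P' : (ℕ → D) → Prop) (g : ℕ → D)
    (h : ∀ g' : ℕ → D, (∀ i, i < j ∨ j + pre.length ≤ i → g' i = g i) → (P g' ↔ P' g')) :
    quantSem pre j P g ↔ quantSem pre j P' g :=
  ⟨quantSem_mono_on pre j P P' g fun g' hg' => (h g' hg').1,
   quantSem_mono_on pre j P' P g fun g' hg' => (h g' hg').2⟩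

theorem quantSem_append :
    ∀ (p r : List Bool) (j : ℕ) (P : (ℕ → D) → Prop) (g : ℕ → D),
      quantSem (p ++ r) j P g ↔
        quantSem p j (fun g' => quantSem r (j + p.length) P g') g
  | [], r, j, P, g => by simp [quantSem]
  | b :: p, r, j, P, g => by
      have IH : ∀ d : D,
          quantSem (p ++ r) (j + 1) P (Function.update g j d) ↔
            quantSem p (j + 1) (fun g' => quantSem r (j + 1 + p.length) P g')
              (Function.update g j d) :=
        fun d => quantSem_append p r (j + 1) P (Function.update g j d)
      have harith : j + 1 + p.length = j + (p.length + 1) := by omega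
      rw [harith] at IH
      cases b with
      | true =>
          simp only [List.cons_append, quantSem, List.length_cons, if_true]
          exact exists_congr IH
      | false =>
          simp only [List.cons_append, quantSem, List.length_cons,
            Bool.false_eq_true, if_false]
          exact forall_congr' IH

theorem quantSem_neg :
    ∀ (pre : List Bool) (j : ℕ) (P : (ℕ → D) → Prop) (g : ℕ → D),
      quantSem (pre.map (!·)) j P g ↔ ¬ quantSem pre j (fun g' => ¬ P g') g
  | [], _, _, _ => by simp [quantSem]
  | b :: pre, j, P, g => by
      have IH := fun d : D => quantSem_neg pre (j + 1) P (Function.update g j d)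
      cases b with
      | true =>
          simp only [List.map_cons, Bool.not_true, quantSem, Bool.false_eq_true,
            if_false, if_true, not_exists]
          exact forall_congr' IH
      | false =>
          simp only [List.map_cons, Bool.not_false, quantSem, Bool.false_eq_true,
            if_false, if_true, not_forall, not_not]
          exact exists_congr IH

end QuantSem

/-! ### Correctness of the prenex normal form -/

section Prenex

variable {D Q : Type} {ar : Q → ℕ}

theorem prenex_fv :
    ∀ {V : Type} (φ : Fml D Q ar V) (k : ℕ),
      Sum.inr k ∈ (prenex φ).mat.fv → k < (prenex φ).pre.length
  | _, .eq t s, k => by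
      intro hk
      simp only [prenex, QF.fv] at hk
      rcases hk with hk | hk <;>
      · obtain ⟨v, -, hv⟩ := Term.vars_rename Sum.inl _ _ hk
        exact absurd hv (by simp)
  | _, .pred q ts, k => by
      intro hk
      simp only [prenex, QF.fv] at hk
      obtain ⟨i, hi⟩ := Set.mem_iUnion.1 hk
      obtain ⟨v, -, hv⟩ := Term.vars_rename Sum.inl _ _ hi
      exact absurd hv (by simp)
  | _, .not φ, k => by
      intro hk
      simp only [prenex, QF.fv, List.length_map] at hk ⊢
      exact prenex_fv φ k hk
  | _, .and φ ψ, k => by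
      intro hk
      simp only [prenex, QF.fv, List.length_append] at hk ⊢
      rcases hk with hk | hk
      · exact lt_of_lt_of_le (prenex_fv φ k hk) (Nat.le_add_right _ _)
      · obtain ⟨v, hv, hv'⟩ := QF.fv_rename _ _ _ hk
        rcases v with v | k'
        · exact absurd hv' (by simp [Sum.map])
        · simp only [Sum.map_inr, Sum.inr.injEq] at hv'
          have := prenex_fv ψ k' hv
          omega
  | _, .ex φ, k => by
      intro hk
      simp only [prenex, List.length_cons]
      obtain ⟨v, hv, hv'⟩ := QF.fv_rename _ _ _ hk
      rcases v with (_ | x) | j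
      · simp only at hv'
        rcases hv' with rfl | h
        · omega
      · exact absurd hv' (by simp)
      · simp only [Sum.inr.injEq] at hv'
        have := prenex_fv φ j hv
        omega

theorem prenex_correct [Nonempty D] (I : Interp D Q ar) :
    ∀ {V : Type} (φ : Fml D Q ar V) (ν : V → D) (j : ℕ) (g : ℕ → D),
      quantSem (prenex φ).pre j
        (fun g' => (prenex φ).mat.Sat I (Sum.elim ν fun k => g' (k + j))) g
      ↔ φ.Sat I ν
  | _, .eq t s, ν, j, g => by
      simp only [prenex, quantSem, QF.Sat, Fml.Sat, Term.eval_rename]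
      constructor <;> intro h <;> convert h using 2 <;> funext v <;> rfl
  | _, .pred q ts, ν, j, g => by
      simp only [prenex, quantSem, QF.Sat, Fml.Sat, Term.eval_rename]
      constructor <;> intro h <;> convert h using 2 <;>
        (apply Term.eval_congr; intro v _; rfl)
  | _, .not φ, ν, j, g => by
      simp only [prenex, QF.Sat, Fml.Sat]
      rw [quantSem_neg]
      refine not_congr ?_
      rw [quantSem_iff_on _ _ _
        (fun g' => (prenex φ).mat.Sat I (Sum.elim ν fun k => g' (k + j))) g
        (fun g' _ => not_not)]
      exact prenex_correct I φ ν j g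
  | _, .and φ ψ, ν, j, g => by
      simp only [prenex, QF.Sat, Fml.Sat]
      rw [quantSem_append]
      set L := (prenex φ).pre.length with hL
      have hren : ∀ g'' : ℕ → D,
          ((prenex ψ).mat.rename (Sum.map id (· + L))).Sat I
              (Sum.elim ν fun k => g'' (k + j)) ↔
            (prenex ψ).mat.Sat I (Sum.elim ν fun k => g'' (k + (j + L))) := by
        intro g''
        rw [QF.sat_rename]
        have : ((Sum.elim ν fun k => g'' (k + j)) ∘ Sum.map id (· + L)) =
            Sum.elim ν fun k => g'' (k + (j + L)) := by
          funext v
          rcases v with x | k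
          · rfl
          · show g'' (k + L + j) = g'' (k + (j + L))
            congr 1; omega
        rw [this]
      have hA : ∀ g' g'' : ℕ → D, (∀ i, i < j + L → g'' i = g' i) →
          ((prenex φ).mat.Sat I (Sum.elim ν fun k => g' (k + j)) ↔
            (prenex φ).mat.Sat I (Sum.elim ν fun k => g'' (k + j))) := by
        intro g' g'' hgg
        apply QF.sat_congr
        intro v hv
        rcases v with x | k
        · rfl
        · have hk := prenex_fv φ k hv
          exact (hgg (k + j) (by omega)).symm
      constructor
      · rintro hq
        constructor
        · refine (prenex_correct I φ ν j g).mp ?_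
          refine quantSem_mono_on _ _ _ _ g ?_ hq
          intro g' _ hinner
          refine quantSem_out _ _ _ g' ?_ hinner
          intro g'' hg'' hcc
          exact (hA g' g'' fun i hi => hg'' i (Or.inl hi)).mpr hcc.1
        · refine quantSem_out _ _ _ g ?_ hq
          intro g' _ hinner
          refine (prenex_correct I ψ ν (j + L) g').mp ?_
          refine quantSem_mono_on _ _ _ _ g' ?_ hinner
          intro g'' _ hcc
          exact (hren g'').mp hcc.2
      · rintro ⟨hφ, hψ⟩
        have h1 := (prenex_correct I φ ν j g).mpr hφ
        refine quantSem_mono_on _ _ _ _ g ?_ h1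
        intro g' _ hA'
        have h2 := (prenex_correct I ψ ν (j + L) g').mpr hψ
        refine quantSem_mono_on _ _ _ _ g' ?_ h2
        intro g'' hg'' hB
        exact ⟨(hA g' g'' fun i hi => hg'' i (Or.inl hi)).mp hA', (hren g'').mpr hB⟩
  | _, .ex φ, ν, j, g => by
      simp only [prenex, QF.Sat, Fml.Sat, quantSem, if_true]
      refine exists_congr fun d => ?_
      rw [← prenex_correct I φ (fun o => o.elim d ν) (j + 1) (Function.update g j d)]
      refine quantSem_iff_on _ _ _ _ _ ?_
      intro g' hg'
      rw [QF.sat_rename]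
      apply QF.sat_congr
      intro v _
      rcases v with (_ | x) | k
      · show g' (0 + j) = d
        have h0 : g' j = Function.update g j d j := hg' j (Or.inl (by omega))
        rw [show 0 + j = j by omega, h0, Function.update_self]
      · rfl
      · show g' (k + 1 + j) = g' (k + (j + 1))
        congr 1; omega

end Prenex

/-! ### Semantic lemmas on the automaton-level formulas -/

section Auto

variable {Sig X D : Type} [Nonempty D]

theorem stepFml_sat (A : FOAA Sig X D) {k : ℕ} {a : Sig}
    {I : Interp D (ℕ × A.Q) (fun p => A.ar p.2)} {ν : (ℕ × X) → D}
    (h : (A.stepFml k a).Sat I ν) (q : A.Q) (d : Fin (A.ar q) → D)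
    (hd : (fun i => d i) ∈ I (k, q)) :
    (A.ruleF (k + 1) q a).Sat I (Sum.elim ν d) := by
  have h1 := (Fml.sat_conj _).mp h
    (Fml.allN (Fml.imp (.pred (k, q) fun i => .var (Sum.inr i)) (A.ruleF (k + 1) q a)))
    (List.mem_map_of_mem (A.QList_mem q))
  have h2 := (Fml.sat_allN _ _).mp h1 d
  rw [Fml.sat_imp] at h2
  exact h2 hd

theorem finalFml_sat (A : FOAA Sig X D) {n : ℕ}
    {I : Interp D (ℕ × A.Q) (fun p => A.ar p.2)} {ν : (ℕ × X) → D}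
    (h : (A.finalFml n).Sat I ν) (q : A.Q) (hq : q ∉ A.F) (d : Fin (A.ar q) → D) :
    (fun i => d i) ∉ I (n, q) := by
  intro hd
  have h1 := (Fml.sat_conj _).mp h
    (if q ∈ A.F then Fml.tt
     else Fml.allN (Fml.imp (.pred (n, q) fun i => .var (Sum.inr i)) Fml.ff))
    (List.mem_map_of_mem (A.QList_mem q))
  rw [if_neg hq] at h1
  have h2 := (Fml.sat_allN _ _).mp h1 d
  rw [Fml.sat_imp] at h2
  exact Fml.not_sat_ff (h2 hd)

/-- The fold function of `stepPF`, as a standalone definition. -/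
def FOAA.stepF (A : FOAA Sig X D) (j : ℕ) (a : Sig)
    (acc : PF D (ℕ × A.Q) (fun p => A.ar p.2) (ℕ × X))
    (atm : Σ p : ℕ × A.Q, Fin (A.ar p.2) → Term D ((ℕ × X) ⊕ ℕ)) :
    PF D (ℕ × A.Q) (fun p => A.ar p.2) (ℕ × X) :=
  let pψ := prenex (A.ruleF (j + 1) atm.1.2 a)
  let m' : QF D (ℕ × A.Q) (fun p => A.ar p.2) ((ℕ × X) ⊕ ℕ) :=
    pψ.mat.subst fun v =>
      match v with
      | Sum.inl (Sum.inl x) => Term.var (Sum.inl x)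
      | Sum.inl (Sum.inr i) => atm.2 i
      | Sum.inr jj => Term.var (Sum.inr (jj + acc.pre.length))
  ⟨acc.pre ++ pψ.pre, .and acc.mat (QF.imp (.pred atm.1 atm.2) m')⟩

theorem stepPF_eq (A : FOAA Sig X D) (j : ℕ) (a : Sig)
    (Θ : PF D (ℕ × A.Q) (fun p => A.ar p.2) (ℕ × X)) :
    A.stepPF j a Θ = (Θ.mat.atoms.filter fun atm => atm.1.1 == j).foldl (A.stepF j a) Θ :=
  rfl

theorem stepPF_fold (A : FOAA Sig X D) (j : ℕ) (a : Sig)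
    (ν : (ℕ × X) → D) (I : Interp D (ℕ × A.Q) (fun p => A.ar p.2))
    (hstep : (A.stepFml j a).Sat I ν) (N : ℕ) :
    ∀ (L : List (Σ p : ℕ × A.Q, Fin (A.ar p.2) → Term D ((ℕ × X) ⊕ ℕ)))
      (acc : PF D (ℕ × A.Q) (fun p => A.ar p.2) (ℕ × X)),
      (∀ atm ∈ L, atm.1.1 = j ∧ ∀ (i : Fin (A.ar atm.1.2)) (kk : ℕ),
          Sum.inr kk ∈ (atm.2 i).vars → kk < N) →
      N ≤ acc.pre.length →
      (∀ kk, Sum.inr kk ∈ acc.mat.fv → kk < acc.pre.length) →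
      acc.Sat I ν →
      N ≤ (L.foldl (A.stepF j a) acc).pre.length ∧
      (∀ kk, Sum.inr kk ∈ (L.foldl (A.stepF j a) acc).mat.fv →
        kk < (L.foldl (A.stepF j a) acc).pre.length) ∧
      (L.foldl (A.stepF j a) acc).Sat I ν
  | [], acc, _, hN, hfv, hsat => ⟨hN, hfv, hsat⟩
  | atm :: L, acc, hL, hN, hfv, hsat => by
      obtain ⟨⟨j', q⟩, ts⟩ := atm
      obtain ⟨hj, hts⟩ := hL _ (List.mem_cons_self)
      simp only at hj
      replace hj := hj.symm
      subst hj
      rw [List.foldl_cons]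
      set J := acc.pre.length with hJdef
      set pψ := prenex (A.ruleF (j + 1) q a) with hpψ
      -- term congruences
      have hpredc : ∀ g g' : ℕ → D, (∀ kk, kk < J → g' kk = g kk) → ∀ i : Fin (A.ar q),
          (ts i).eval (Sum.elim ν g') = (ts i).eval (Sum.elim ν g) := by
        intro g g' hgg i
        apply Term.eval_congr
        intro v hv
        rcases v with x | kk
        · rfl
        · exact hgg kk (lt_of_lt_of_le (hts i kk hv) hN)
      have hmatc : ∀ g g' : ℕ → D, (∀ kk, kk < J → g' kk = g kk) →
          acc.mat.Sat I (Sum.elim ν g) → acc.mat.Sat I (Sum.elim ν g') := by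
        intro g g' hgg hm
        refine (QF.sat_congr acc.mat ?_).mp hm
        intro v hv
        rcases v with x | kk
        · rfl
        · exact (hgg kk (hfv kk hv)).symm
      -- fv bound for the new accumulator
      have hfv' : ∀ kk, Sum.inr kk ∈ (A.stepF j a acc ⟨(j, q), ts⟩).mat.fv →
          kk < (A.stepF j a acc ⟨(j, q), ts⟩).pre.length := by
        intro kk hkk
        show kk < (acc.pre ++ pψ.pre).length
        rw [List.length_append]
        simp only [FOAA.stepF, QF.imp, QF.fv, Set.mem_union] at hkk
        rcases hkk with hkk | hkk | hkk
        · exact lt_of_lt_of_le (hfv kk hkk) (Nat.le_add_right _ _)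
        · obtain ⟨i, hi⟩ := Set.mem_iUnion.1 hkk
          have := lt_of_lt_of_le (hts i kk hi) hN
          omega
        · obtain ⟨v, hv, hv'⟩ := QF.fv_subst _ _ _ hkk
          rcases v with (x | i) | jj
          · simp only [Term.vars, Set.mem_singleton_iff] at hv'
            exact absurd hv' (by simp)
          · have := lt_of_lt_of_le (hts i kk hv') hN
            omega
          · simp only [Term.vars, Set.mem_singleton_iff, Sum.inr.injEq] at hv'
            have h2 : jj < pψ.pre.length := by rw [hpψ]; exact prenex_fv _ jj hv
            omega
      -- satisfaction of the new accumulator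
      have hsat' : (A.stepF j a acc ⟨(j, q), ts⟩).Sat I ν := by
        show quantSem (acc.pre ++ pψ.pre) 0 _ _
        rw [quantSem_append]
        simp only [Nat.zero_add]
        refine quantSem_mono_on _ _ _ _ _ ?_ hsat
        intro g _ hacc
        by_cases hpred : (fun i => (ts i).eval (Sum.elim ν g)) ∈ I (j, q)
        · -- rule must be satisfied
          have hr := stepFml_sat A hstep q (fun i => (ts i).eval (Sum.elim ν g)) hpred
          have hq := (prenex_correct I (A.ruleF (j + 1) q a) _ J g).mpr hr
          refine quantSem_mono_on _ _ _ _ _ ?_ hq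
          intro g' hg' hm
          have hgg : ∀ kk, kk < J → g' kk = g kk := fun kk hkk => hg' kk (Or.inl hkk)
          refine ⟨hmatc g g' hgg hacc, ?_⟩
          rw [QF.sat_imp]
          intro _
          rw [QF.sat_subst]
          refine (QF.sat_congr _ ?_).mp hm
          intro v _
          rcases v with (x | i) | kk
          · rfl
          · exact (hpredc g g' hgg i).symm
          · rfl
        · -- guard fails, implication trivially true
          refine quantSem_intro _ _ _ _ ?_
          intro g' hg'
          have hgg : ∀ kk, kk < J → g' kk = g kk := fun kk hkk => hg' kk (Or.inl hkk)
          refine ⟨hmatc g g' hgg hacc, ?_⟩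
          rw [QF.sat_imp]
          intro hp
          exfalso
          apply hpred
          have : (fun i => (ts i).eval (Sum.elim ν g')) = fun i => (ts i).eval (Sum.elim ν g) :=
            funext fun i => hpredc g g' hgg i
          rw [← this]
          exact hp
      refine stepPF_fold A j a ν I hstep N L (A.stepF j a acc ⟨(j, q), ts⟩)
        (fun atm h => hL atm (List.mem_cons_of_mem _ h)) ?_ hfv' hsat'
      show N ≤ (acc.pre ++ pψ.pre).length
      rw [List.length_append]
      omega

theorem stage_fold (A : FOAA Sig X D) (α : List Sig)
    (ν : (ℕ × X) → D) (I : Interp D (ℕ × A.Q) (fun p => A.ar p.2))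
    (hsteps : ∀ j : Fin α.length, (A.stepFml j.val (α.get j)).Sat I ν) :
    ∀ (js : List (Fin α.length)) (acc : PF D (ℕ × A.Q) (fun p => A.ar p.2) (ℕ × X)),
      (∀ kk, Sum.inr kk ∈ acc.mat.fv → kk < acc.pre.length) →
      acc.Sat I ν →
      (∀ kk, Sum.inr kk ∈
          (js.foldl (fun acc j => A.stepPF j.val (α.get j) acc) acc).mat.fv →
        kk < (js.foldl (fun acc j => A.stepPF j.val (α.get j) acc) acc).pre.length) ∧
      (js.foldl (fun acc j => A.stepPF j.val (α.get j) acc) acc).Sat I ν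
  | [], acc, hfv, hsat => ⟨hfv, hsat⟩
  | j :: js, acc, hfv, hsat => by
      rw [List.foldl_cons]
      have hstep := stepPF_fold A j.val (α.get j) ν I (hsteps j) acc.pre.length
        (acc.mat.atoms.filter fun atm => atm.1.1 == j.val) acc
        (fun atm hatm => by
          rw [List.mem_filter] at hatm
          refine ⟨by simpa using hatm.2, ?_⟩
          intro i kk hkk
          exact hfv kk (QF.atoms_fv acc.mat atm hatm.1 i _ hkk))
        le_rfl hfv hsat
      rw [← stepPF_eq] at hstep
      exact stage_fold A α ν I hsteps js _ hstep.2.1 hstep.2.2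

theorem final_fold (A : FOAA Sig X D) (n : ℕ)
    (I : Interp D (ℕ × A.Q) (fun p => A.ar p.2))
    (hfin : ∀ q : A.Q, q ∉ A.F → ∀ d : Fin (A.ar q) → D, (fun i => d i) ∉ I (n, q)) :
    ∀ L : List (Σ p : ℕ × A.Q, Fin (A.ar p.2) → Term D ((ℕ × X) ⊕ ℕ)),
      (∀ atm ∈ L, atm.1.1 = n) →
      ∀ (m : QF D (ℕ × A.Q) (fun p => A.ar p.2) ((ℕ × X) ⊕ ℕ)) (μ : ((ℕ × X) ⊕ ℕ) → D),
        m.Sat I μ →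
        (L.foldl
          (fun m atm =>
            if atm.1.2 ∈ A.F then m
            else .and m (QF.imp (.pred atm.1 atm.2)
              (.not (.eq (Term.const (Classical.arbitrary D))
                (Term.const (Classical.arbitrary D)))))) m).Sat I μ
  | [], _, m, μ, hm => hm
  | atm :: L, hL, m, μ, hm => by
      obtain ⟨⟨n', q⟩, ts⟩ := atm
      have hn : n = n' := (hL _ (List.mem_cons_self)).symm
      subst hn
      rw [List.foldl_cons]
      refine final_fold A n I hfin L (fun atm h => hL _ (List.mem_cons_of_mem _ h)) _ μ ?_
      by_cases hqF : q ∈ A.F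
      · simpa only [if_pos hqF] using hm
      · rw [if_neg hqF]
        refine ⟨hm, ?_⟩
        rw [QF.sat_imp]
        intro hp
        exact absurd hp (hfin q hqF fun i => (ts i).eval μ)

end Auto

/-- Lemma 3.1. -/
theorem statement_2 {Sig X D : Type} [Finite Sig] [Finite X] [Infinite D] [Nonempty D]
    (A : FOAA Sig X D) (α : List Sig) (ν : (ℕ × X) → D)
    (I : Interp D (ℕ × A.Q) (fun p => A.ar p.2)) (h : (A.upsilon α).Sat I ν) :
    (A.thetaHat α).Sat I ν := by
  obtain ⟨⟨hinit, hconj⟩, hfinal⟩ := h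
  have hsteps : ∀ j : Fin α.length, (A.stepFml j.val (α.get j)).Sat I ν := fun j =>
    (Fml.sat_conj _).mp hconj _ (List.mem_map_of_mem (List.mem_finRange j))
  set base := prenex ((stampF 0 A.init).rename fun v : Empty => v.elim) with hbase_def
  have hbase : base.Sat I ν := by
    show quantSem base.pre 0 (fun g => base.mat.Sat I (Sum.elim ν g))
      fun _ => Classical.arbitrary D
    rw [quantSem_iff_on base.pre 0 _
      (fun g => base.mat.Sat I (Sum.elim ν fun k => g (k + 0))) _ ?_]
    · rw [hbase_def]
      exact (prenex_correct I _ ν 0 _).mpr hinit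
    · intro g' _
      apply QF.sat_congr
      intro v _
      rcases v with x | k
      · rfl
      · show g' k = g' (k + 0)
        congr 1
  have hbasefv : ∀ kk, Sum.inr kk ∈ base.mat.fv → kk < base.pre.length := by
    rw [hbase_def]
    exact fun kk hkk => prenex_fv _ kk hkk
  have hstage := stage_fold A α ν I hsteps (List.finRange α.length) base hbasefv hbase
  have hthn : A.thetaHatN α =
      (List.finRange α.length).foldl (fun acc j => A.stepPF j.val (α.get j) acc) base := by
    show A.thetaHatStage α α.length = _
    unfold FOAA.thetaHatStage
    rw [show (List.finRange α.length).take α.length = List.finRange α.length from by simp]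
  rw [← hthn] at hstage
  obtain ⟨hNfv, hNsat⟩ := hstage
  have hfin : ∀ q : A.Q, q ∉ A.F → ∀ d : Fin (A.ar q) → D,
      (fun i => d i) ∉ I (α.length, q) :=
    fun q hq d => finalFml_sat A hfinal q hq d
  show quantSem (A.thetaHatN α).pre 0 (fun g => _) fun _ => Classical.arbitrary D
  refine quantSem_mono_on _ _ (fun g => (A.thetaHatN α).mat.Sat I (Sum.elim ν g)) _ _ ?_ hNsat
  intro g _ hm
  refine final_fold A α.length I hfin _ ?_ _ _ hm
  intro atm hatm
  rw [List.mem_filter] at hatm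
  simpa using hatm.2

end FOADA
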